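/- arXiv:0705.2377 — 3 statements merged into one kernel-verified Lean document; each statement's English description precedes it below -/
import Mathlib

section
/- Let σ be a permutation of Fin n and let i < j satisfy σ(i) < σ(j). Let τ = σ ∘ (i j) be the composition with the transposition of i and j. Then noninv(σ) − noninv(τ) = 1 + 2·#{k : i < k < j and σ(i) < σ(k) < σ(j)}, where noninv counts pairs (a,b) with a < b and σ(a) < σ(b). -/
/-!
Write `s = (i j)` and reindex the pairs counted by `noninv (σ * s)` through `s`: both counts then
run over the pairs `(a, b)` with `σ a < σ b`, one asking `a < b`, the other `s a < s b`. These two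
order conditions differ only on pairs made of `i` or `j` and a point `k` of `Ioo i j` (besides the
pair `(i, j)` itself), so the difference is `1` plus, for each such `k`, a signed count of the
four pairs `(i, k), (k, i), (k, j), (j, k)`, which is `2` if `σ i < σ k < σ j` and `0` otherwise.
-/

def noninv {n : ℕ} (σ : Equiv.Perm (Fin n)) : ℕ :=
  (Finset.univ.filter (fun p : Fin n × Fin n => p.1 < p.2 ∧ σ p.1 < σ p.2)).card

open Finset Equiv

section SwapOrder

variable {α : Type*} [LinearOrder α] [LocallyFiniteOrder α] {i j : α}

theorem ite_lt_sub_ite_swap_lt (hij : i < j) (a b : α) :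
    ((if a < b then 1 else 0) - (if swap i j a < swap i j b then 1 else 0) : ℤ)
      = (if a = i ∧ b = j then 1 else 0) - (if a = j ∧ b = i then 1 else 0)
        + (if a = i ∧ b ∈ Ioo i j then 1 else 0) - (if b = i ∧ a ∈ Ioo i j then 1 else 0)
        + (if b = j ∧ a ∈ Ioo i j then 1 else 0) - (if a = j ∧ b ∈ Ioo i j then 1 else 0) := by
  by_cases a = i <;> by_cases a = j <;> grind

theorem sum_mul_ite_lt_sub_ite_swap_lt [Fintype α] (hij : i < j) (w : α → α → ℤ) :
    ∑ a, ∑ b, w a b * ((if a < b then 1 else 0) - (if swap i j a < swap i j b then 1 else 0))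
      = w i j - w j i + ∑ k ∈ Ioo i j, (w i k - w k i + w k j - w j k) := by
  simp only [ite_lt_sub_ite_swap_lt hij, mul_add, mul_sub, mul_ite, mul_one, mul_zero,
    sum_add_distrib, sum_sub_distrib, ite_and, sum_ite_irrel, sum_const_zero,
    Fintype.sum_ite_eq', sum_ite_mem, univ_inter]
  ring

end SwapOrder

theorem ite_lt_sub_ite_lt_add_ite_lt_sub_ite_lt {β : Type*} [LinearOrder β] {x y z : β}
    (hxz : x < z) (hyx : y ≠ x) (hyz : y ≠ z) :
    ((if x < y then 1 else 0) - (if y < x then 1 else 0) + (if y < z then 1 else 0)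
      - (if z < y then 1 else 0) : ℤ) = 2 * if x < y ∧ y < z then 1 else 0 := by
  grind

theorem noninv_eq_sum {n : ℕ} (σ : Perm (Fin n)) :
    (noninv σ : ℤ) = ∑ a, ∑ b, if a < b ∧ σ a < σ b then 1 else 0 := by
  rw [noninv, card_filter, Fintype.sum_prod_type]
  push_cast
  rfl

theorem noninv_mul {n : ℕ} (σ π : Perm (Fin n)) :
    (noninv (σ * π) : ℤ) = ∑ a, ∑ b, if π⁻¹ a < π⁻¹ b ∧ σ a < σ b then 1 else 0 := by
  rw [noninv_eq_sum]
  exact Fintype.sum_equiv π _ _ fun _ => Fintype.sum_equiv π _ _ fun _ => by simp; rfl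

/-- For `i < j` with `σ i < σ j` and `τ = σ ∘ (i j)`,
`noninv σ - noninv τ = 1 + 2·#{k : i < k < j ∧ σ i < σ k < σ j}`. -/
theorem noninv_swap (n : ℕ) (σ : Equiv.Perm (Fin n)) (i j : Fin n)
    (hij : i < j) (hσ : σ i < σ j) :
    (noninv σ : ℤ) - (noninv (σ * Equiv.swap i j) : ℤ)
      = 1 + 2 * ((Finset.univ.filter
          (fun k : Fin n => i < k ∧ k < j ∧ σ i < σ k ∧ σ k < σ j)).card : ℤ) := by
  set w : Fin n → Fin n → ℤ := fun a b => if σ a < σ b then 1 else 0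
  have hreindex : (noninv σ : ℤ) - noninv (σ * swap i j) = ∑ a, ∑ b, w a b *
      ((if a < b then 1 else 0) - (if swap i j a < swap i j b then 1 else 0)) := by
    rw [noninv_eq_sum, noninv_mul, swap_inv, ← sum_sub_distrib]
    refine sum_congr rfl fun a _ => ?_
    rw [← sum_sub_distrib]
    refine sum_congr rfl fun b _ => ?_
    simp only [w, ite_and]
    split_ifs <;> simp
  have hbetween : ∀ k ∈ Ioo i j,
      w i k - w k i + w k j - w j k = 2 * if σ i < σ k ∧ σ k < σ j then 1 else 0 := by
    intro k hk
    obtain ⟨hik, hkj⟩ := mem_Ioo.mp hk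
    exact ite_lt_sub_ite_lt_add_ite_lt_sub_ite_lt hσ
      (σ.injective.ne hik.ne') (σ.injective.ne hkj.ne)
  have hfilter : univ.filter (fun k : Fin n => i < k ∧ k < j ∧ σ i < σ k ∧ σ k < σ j)
      = (Ioo i j).filter (fun k => σ i < σ k ∧ σ k < σ j) := by
    ext k
    simp [and_assoc]
  rw [hreindex, sum_mul_ite_lt_sub_ite_swap_lt hij, sum_congr rfl hbetween, ← mul_sum,
    hfilter, card_filter]
  simp [w, hσ, hσ.not_gt]
end

section
/- Let σ be a permutation of Fin n, i < j with σ(i) < σ(j), and τ = σ ∘ (i j). Embed the generator as x_σ = {(2i, 2σ(i)) : i ∈ Fin n} ⊆ ℤ², and let B ⊆ ℤ² be a finite set all of whose elements have both coordinates odd. Then J(x_σ, B) − J(x_τ, B) = #{b ∈ B : 2i < b₁ < 2j and 2σ(i) < b₂ < 2σ(j)}, i.e. the number of decorations of B inside the rectangle spanned by the swapped dots. -/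
/-- `2·J(A,B)` is the number of pairs `(a,b) ∈ A × B` with `(b₁-a₁)(b₂-a₂) > 0`. -/
def J (A B : Finset (ℤ × ℤ)) : ℚ :=
  (((A ×ˢ B).filter (fun p => 0 < (p.2.1 - p.1.1) * (p.2.2 - p.1.2))).card : ℚ) / 2

/-- The set of dots of the generator associated to `σ`: `{(2l, 2σ(l)) : l ∈ Fin n}`. -/
def dots {n : ℕ} (σ : Equiv.Perm (Fin n)) : Finset (ℤ × ℤ) :=
  Finset.univ.image (fun l : Fin n => (2 * ((l : ℕ) : ℤ), 2 * ((σ l : ℕ) : ℤ)))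

lemma cast_card_filter {α : Type*} (s : Finset α) (p : α → Prop) [DecidablePred p] :
    ((s.filter p).card : ℚ) = ∑ x ∈ s, if p x then (1:ℚ) else 0 := by
  rw [Finset.card_filter]
  push_cast
  rfl

lemma key (A1 A2 C1 C2 : ℤ) (h1 : A1 ≠ 0) (h2 : A2 ≠ 0) (h3 : C1 ≠ 0) (h4 : C2 ≠ 0)
    (hA : A2 < A1) (hC : C2 < C1) :
    ((if 0 < A1 * C1 then (1:ℚ) else 0) - (if 0 < A1 * C2 then (1:ℚ) else 0))
      + ((if 0 < A2 * C2 then (1:ℚ) else 0) - (if 0 < A2 * C1 then (1:ℚ) else 0))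
      = 2 * (if 0 < A1 ∧ A2 < 0 ∧ 0 < C1 ∧ C2 < 0 then (1:ℚ) else 0) := by
  simp only [mul_pos_iff]
  split_ifs <;> first | (exfalso; omega) | norm_num

/-- For `i < j` with `σ i < σ j`, `τ = σ ∘ (i j)` and `B` a finite set of odd points,
`J(x_σ, B) - J(x_τ, B)` is the number of points of `B` in the rectangle spanned by the
swapped dots. -/
theorem J_swap_decorations (n : ℕ) (σ : Equiv.Perm (Fin n)) (i j : Fin n)
    (hij : i < j) (hσ : σ i < σ j) (B : Finset (ℤ × ℤ))
    (hB : ∀ b ∈ B, Odd b.1 ∧ Odd b.2) :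
    J (dots σ) B - J (dots (σ * Equiv.swap i j)) B
      = ((B.filter (fun b => 2 * ((i : ℕ) : ℤ) < b.1 ∧ b.1 < 2 * ((j : ℕ) : ℤ) ∧
          2 * ((σ i : ℕ) : ℤ) < b.2 ∧ b.2 < 2 * ((σ j : ℕ) : ℤ))).card : ℚ) := by
  classical
  set τ := σ * Equiv.swap i j with hτ
  have hJ : ∀ (ρ : Equiv.Perm (Fin n)),
      J (dots ρ) B = (∑ l : Fin n, ∑ b ∈ B,
        if 0 < (b.1 - 2 * ((l : ℕ) : ℤ)) * (b.2 - 2 * ((ρ l : ℕ) : ℤ)) then (1:ℚ) else 0) / 2 := by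
    intro ρ
    have hinj : ∀ a ∈ (Finset.univ : Finset (Fin n)), ∀ b ∈ Finset.univ,
        (fun l : Fin n => ((2 * ((l : ℕ) : ℤ), 2 * ((ρ l : ℕ) : ℤ)) : ℤ × ℤ)) a =
        (fun l : Fin n => ((2 * ((l : ℕ) : ℤ), 2 * ((ρ l : ℕ) : ℤ)) : ℤ × ℤ)) b → a = b := by
      intro a _ b _ h
      have h1 := congrArg Prod.fst h
      simp only at h1
      have : (a : ℕ) = (b : ℕ) := by omega
      exact Fin.ext this
    unfold J dots
    rw [cast_card_filter, Finset.sum_product, Finset.sum_image hinj]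
  rw [hJ σ, hJ τ, div_sub_div_same, ← Finset.sum_sub_distrib]
  have hstep : ∀ l : Fin n,
      ((∑ b ∈ B, if 0 < (b.1 - 2 * ((l : ℕ) : ℤ)) * (b.2 - 2 * ((σ l : ℕ) : ℤ)) then (1:ℚ) else 0)
        - ∑ b ∈ B, if 0 < (b.1 - 2 * ((l : ℕ) : ℤ)) * (b.2 - 2 * ((τ l : ℕ) : ℤ)) then (1:ℚ) else 0)
      = ∑ b ∈ B, ((if 0 < (b.1 - 2 * ((l : ℕ) : ℤ)) * (b.2 - 2 * ((σ l : ℕ) : ℤ)) then (1:ℚ) else 0)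
        - (if 0 < (b.1 - 2 * ((l : ℕ) : ℤ)) * (b.2 - 2 * ((τ l : ℕ) : ℤ)) then (1:ℚ) else 0)) := by
    intro l; rw [Finset.sum_sub_distrib]
  simp only [hstep]
  rw [Finset.sum_comm]
  have hmain : ∀ b ∈ B,
      (∑ l : Fin n, ((if 0 < (b.1 - 2 * ((l : ℕ) : ℤ)) * (b.2 - 2 * ((σ l : ℕ) : ℤ)) then (1:ℚ) else 0)
        - (if 0 < (b.1 - 2 * ((l : ℕ) : ℤ)) * (b.2 - 2 * ((τ l : ℕ) : ℤ)) then (1:ℚ) else 0)))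
      = 2 * (if (2 * ((i : ℕ) : ℤ) < b.1 ∧ b.1 < 2 * ((j : ℕ) : ℤ) ∧
          2 * ((σ i : ℕ) : ℤ) < b.2 ∧ b.2 < 2 * ((σ j : ℕ) : ℤ)) then (1:ℚ) else 0) := by
    intro b hb
    obtain ⟨⟨k1, hk1⟩, ⟨k2, hk2⟩⟩ := hB b hb
    have hzero : ∀ l ∈ (Finset.univ : Finset (Fin n)), l ∉ ({i, j} : Finset (Fin n)) →
        ((if 0 < (b.1 - 2 * ((l : ℕ) : ℤ)) * (b.2 - 2 * ((σ l : ℕ) : ℤ)) then (1:ℚ) else 0)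
        - (if 0 < (b.1 - 2 * ((l : ℕ) : ℤ)) * (b.2 - 2 * ((τ l : ℕ) : ℤ)) then (1:ℚ) else 0)) = 0 := by
      intro l _ hl
      simp only [Finset.mem_insert, Finset.mem_singleton, not_or] at hl
      have : τ l = σ l := by
        rw [hτ, Equiv.Perm.mul_apply, Equiv.swap_apply_of_ne_of_ne hl.1 hl.2]
      rw [this, sub_self]
    rw [← Finset.sum_subset (Finset.subset_univ ({i, j} : Finset (Fin n))) hzero,
      Finset.sum_pair hij.ne]
    have hτi : τ i = σ j := by rw [hτ, Equiv.Perm.mul_apply, Equiv.swap_apply_left]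
    have hτj : τ j = σ i := by rw [hτ, Equiv.Perm.mul_apply, Equiv.swap_apply_right]
    rw [hτi, hτj]
    have hijv : (i : ℕ) < (j : ℕ) := hij
    have hσv : ((σ i : Fin n) : ℕ) < ((σ j : Fin n) : ℕ) := hσ
    rw [key (b.1 - 2 * ((i : ℕ) : ℤ)) (b.1 - 2 * ((j : ℕ) : ℤ))
      (b.2 - 2 * ((σ i : ℕ) : ℤ)) (b.2 - 2 * ((σ j : ℕ) : ℤ))
      (by omega) (by omega) (by omega) (by omega) (by push_cast; omega) (by push_cast; omega)]
    congr 1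
    simp [sub_pos, sub_neg]
  rw [Finset.sum_congr rfl hmain, cast_card_filter, ← Finset.mul_sum]
  ring
end

section
/- Let σ be a permutation of Fin n, i < j with σ(i) < σ(j), τ = σ ∘ (i j), and suppose the rectangle is empty of interior dots: there is no k with i < k < j and σ(i) < σ(k) < σ(j). Let B ⊆ ℤ² be a finite set of points with both coordinates odd, x_σ = {(2l, 2σ(l))}, x_τ = {(2l, 2τ(l))}, and define the Maslov grading M_B(A) := J(A,A) − 2·J(A,B) + J(B,B) + 1. Then M_B(x_σ) − M_B(x_τ) = 1 − 2·#{b ∈ B : 2i < b₁ < 2j and 2σ(i) < b₂ < 2σ(j)}. -/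
/-- The Maslov grading `M_B(A) = J(A,A) - 2J(A,B) + J(B,B) + 1`. -/
def M (B A : Finset (ℤ × ℤ)) : ℚ := J A A - 2 * J A B + J B B + 1

/-!
Write `2·J(A,B)` as the sum over `A × B` of the indicator `jInd` of "strictly south-west /
north-east". Passing from `x_σ` to `x_τ` moves the dots at the corners `(2i, 2σi)`, `(2j, 2σj)`
of the rectangle to the other two corners `(2i, 2σj)`, `(2j, 2σi)`. For a point `z` off the four
grid lines through the corners, this lowers the number of dots paired with `z` by `2` if `z` lies
inside the rectangle and leaves it unchanged otherwise. Points of `B` have odd coordinates, so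
this gives `2J(x_σ,B) - 2J(x_τ,B) = 2·#(ρ ∩ B)`. The remaining dots lie outside the rectangle,
so in `2J(x,x)` only the pairs among the moved dots change: the two corners of `x_σ` form an
increasing pair (counted twice), those of `x_τ` a decreasing one.
-/

def jInd (p q : ℤ × ℤ) : ℚ := if 0 < (q.1 - p.1) * (q.2 - p.2) then 1 else 0

lemma jInd_comm (p q : ℤ × ℤ) : jInd p q = jInd q p := by
  rw [jInd, jInd, show (q.1 - p.1) * (q.2 - p.2) = (p.1 - q.1) * (p.2 - q.2) by ring]

lemma J_eq_sum (A B : Finset (ℤ × ℤ)) : J A B = (∑ p ∈ A, ∑ q ∈ B, jInd p q) / 2 := by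
  rw [J, Finset.card_filter, Finset.sum_product]
  push_cast
  rfl

lemma sum_dots {n : ℕ} (σ : Equiv.Perm (Fin n)) (F : ℤ × ℤ → ℚ) :
    ∑ p ∈ dots σ, F p = ∑ l : Fin n, F (2 * ((l : ℕ) : ℤ), 2 * ((σ l : ℕ) : ℤ)) := by
  refine Finset.sum_image fun k _ l _ hkl => Fin.ext ?_
  have := congrArg Prod.fst hkl
  simp only at this
  omega

lemma jInd_corners {a b c d : ℤ} (z : ℤ × ℤ) (hab : a < b) (hcd : c < d)
    (hza : z.1 ≠ a) (hzb : z.1 ≠ b) (hzc : z.2 ≠ c) (hzd : z.2 ≠ d) :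
    jInd (a, c) z + jInd (b, d) z - (jInd (a, d) z + jInd (b, c) z)
      = if a < z.1 ∧ z.1 < b ∧ c < z.2 ∧ z.2 < d then 2 else 0 := by
  simp only [jInd, mul_pos_iff, sub_pos, sub_neg]
  split_ifs <;> norm_num <;> omega

section SwapMove

variable {ι : Type*} [Fintype ι] [DecidableEq ι] {x y : ι → ℤ} {i j : ι}

lemma sum_jInd_sub_sum_jInd_swap (hx : x i < x j) (hy : y i < y j) (z : ℤ × ℤ)
    (hz₁i : z.1 ≠ x i) (hz₁j : z.1 ≠ x j) (hz₂i : z.2 ≠ y i) (hz₂j : z.2 ≠ y j) :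
    ∑ k, jInd (x k, y k) z - ∑ k, jInd (x k, y (Equiv.swap i j k)) z
      = if x i < z.1 ∧ z.1 < x j ∧ y i < z.2 ∧ z.2 < y j then 2 else 0 := by
  have hij : i ≠ j := ne_of_apply_ne x hx.ne
  rw [← Finset.sum_sub_distrib, Fintype.sum_eq_add i j hij, Equiv.swap_apply_left,
    Equiv.swap_apply_right, ← jInd_corners z hx hy hz₁i hz₁j hz₂i hz₂j]
  · ring
  · rintro k ⟨hki, hkj⟩
    rw [Equiv.swap_apply_of_ne_of_ne hki hkj, sub_self]

lemma sum_sum_jInd_sub_swap_eq_two_mul_card (hx : x i < x j) (hy : y i < y j)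
    (B : Finset (ℤ × ℤ))
    (hB : ∀ b ∈ B, b.1 ≠ x i ∧ b.1 ≠ x j ∧ b.2 ≠ y i ∧ b.2 ≠ y j) :
    ∑ k, ∑ b ∈ B, jInd (x k, y k) b - ∑ k, ∑ b ∈ B, jInd (x k, y (Equiv.swap i j k)) b
      = 2 * ((B.filter fun b => x i < b.1 ∧ b.1 < x j ∧ y i < b.2 ∧ b.2 < y j).card : ℚ) := by
  rw [Finset.sum_comm (s := Finset.univ), Finset.sum_comm (s := Finset.univ),
    ← Finset.sum_sub_distrib, Finset.sum_congr rfl fun b hb =>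
      sum_jInd_sub_sum_jInd_swap hx hy b (hB b hb).1 (hB b hb).2.1 (hB b hb).2.2.1
        (hB b hb).2.2.2,
    Finset.sum_ite, Finset.sum_const_zero, Finset.sum_const, nsmul_eq_mul]
  ring

lemma sum_sum_jInd_sub_swap_eq_two (hx : x i < x j) (hy : y i < y j)
    (hxinj : x.Injective) (hyinj : y.Injective)
    (hempty : ¬ ∃ k, x i < x k ∧ x k < x j ∧ y i < y k ∧ y k < y j) :
    ∑ k, ∑ l, jInd (x k, y k) (x l, y l)
      - ∑ k, ∑ l, jInd (x k, y (Equiv.swap i j k)) (x l, y (Equiv.swap i j l)) = 2 := by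
  have hij : i ≠ j := ne_of_apply_ne x hx.ne
  set g : ι → ℤ × ℤ := fun k => (x k, y k)
  set h : ι → ℤ × ℤ := fun k => (x k, y (Equiv.swap i j k))
  have hoff : ∀ k, k ≠ i → k ≠ j → h k = g k := fun k hki hkj => by
    simp only [h, g, Equiv.swap_apply_of_ne_of_ne hki hkj]
  have hrow : ∀ k, k ≠ i ∧ k ≠ j → ∑ l, jInd (g k) (g l) - ∑ l, jInd (h k) (h l) = 0 := by
    rintro k ⟨hki, hkj⟩
    simp only [hoff k hki hkj, jInd_comm (g k)]
    rw [sum_jInd_sub_sum_jInd_swap hx hy (g k) (hxinj.ne hki) (hxinj.ne hkj)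
      (hyinj.ne hki) (hyinj.ne hkj), if_neg fun hk => hempty ⟨k, hk⟩]
  have hcol : ∀ l, l ≠ i ∧ l ≠ j →
      jInd (g i) (g l) + jInd (g j) (g l) - (jInd (h i) (h l) + jInd (h j) (h l)) = 0 := by
    rintro l ⟨hli, hlj⟩
    simp only [hoff l hli hlj, g, h, Equiv.swap_apply_left, Equiv.swap_apply_right]
    rw [jInd_corners (x l, y l) hx hy (hxinj.ne hli) (hxinj.ne hlj) (hyinj.ne hli)
      (hyinj.ne hlj), if_neg fun hl => hempty ⟨l, hl⟩]
  rw [← Finset.sum_sub_distrib, Fintype.sum_eq_add i j hij hrow, ← add_sub_add_comm,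
    ← Finset.sum_add_distrib, ← Finset.sum_add_distrib, ← Finset.sum_sub_distrib,
    Fintype.sum_eq_add i j hij hcol]
  simp only [g, h, Equiv.swap_apply_left, Equiv.swap_apply_right, jInd, mul_pos_iff, sub_pos,
    sub_neg]
  split_ifs <;> norm_num <;> omega

end SwapMove

/-- For an empty rectangle move (`i < j`, `σ i < σ j`, no interior dot),
`M_B(x_σ) - M_B(x_τ) = 1 - 2·#(B ∩ rectangle)`. -/
theorem maslov_empty_rectangle (n : ℕ) (σ : Equiv.Perm (Fin n)) (i j : Fin n)
    (hij : i < j) (hσ : σ i < σ j)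
    (hempty : ¬ ∃ k : Fin n, i < k ∧ k < j ∧ σ i < σ k ∧ σ k < σ j)
    (B : Finset (ℤ × ℤ)) (hB : ∀ b ∈ B, Odd b.1 ∧ Odd b.2) :
    M B (dots σ) - M B (dots (σ * Equiv.swap i j))
      = 1 - 2 * ((B.filter (fun b => 2 * ((i : ℕ) : ℤ) < b.1 ∧ b.1 < 2 * ((j : ℕ) : ℤ) ∧
          2 * ((σ i : ℕ) : ℤ) < b.2 ∧ b.2 < 2 * ((σ j : ℕ) : ℤ))).card : ℚ) := by
  set x : Fin n → ℤ := fun l => 2 * ((l : ℕ) : ℤ)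
  set y : Fin n → ℤ := fun l => 2 * ((σ l : ℕ) : ℤ)
  have hxinj : x.Injective := fun k l hkl => Fin.ext (by simp only [x] at hkl; omega)
  have hyinj : y.Injective := fun k l hkl =>
    σ.injective (Fin.ext (by simp only [y] at hkl; omega))
  have hx : x i < x j := by simp only [x]; omega
  have hy : y i < y j := by simp only [y]; omega
  have hempty' : ¬ ∃ k, x i < x k ∧ x k < x j ∧ y i < y k ∧ y k < y j := by
    rintro ⟨k, h1, h2, h3, h4⟩
    simp only [x, y] at h1 h2 h3 h4
    exact hempty ⟨k, by omega, by omega, by omega, by omega⟩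
  have hBodd : ∀ b ∈ B, b.1 ≠ x i ∧ b.1 ≠ x j ∧ b.2 ≠ y i ∧ b.2 ≠ y j := fun b hb => by
    obtain ⟨⟨r, hr⟩, ⟨s, hs⟩⟩ := hB b hb
    simp only [x, y]
    omega
  have hBdiff := sum_sum_jInd_sub_swap_eq_two_mul_card hx hy B hBodd
  have hself := sum_sum_jInd_sub_swap_eq_two hx hy hxinj hyinj hempty'
  simp only [M, J_eq_sum, sum_dots, Equiv.Perm.mul_apply]
  simp only [x, y] at hself hBdiff
  linarith
end
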